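/- arXiv:1508.01762 — 2 statements merged into one kernel-verified Lean document; each statement's English description precedes it below -/
import Mathlib

section
/- Let χ be a kernel satisfying (χ1), (χ2), and (χ3) with some 0 < β < 1. Then for every uniformly continuous and bounded f: ℝ → ℝ, every x ∈ ℝ, and all sufficiently large w > 0: |(S_w f)(x) - f(x)| ≤ ω(f, w^{-β})·[m_β(χ) + 2m₀(χ)] + 2^{β+1}·‖f‖_∞·m_β(χ)·w^{-β}, where ω(f, δ) is the modulus of continuity of f. -/
/-!
Since the translates of `χ` sum to `1`,
`S_w f(x) - f(x) = ∑ₖ χ(wx - k) · w ∫_{k/w}^{(k+1)/w} (f u - f x) du`, and on the `k`-th cell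
`|u - x| ≤ (1 + |wx - k|) / w`. If `|wx - k| ≤ w / 2` this distance is at most `1`, hence at most
its `β`-th power `≤ (1 + |wx - k| ^ β) w ^ (-β)`, and `ω(f, λδ) ≤ (1 + λ) ω(f, δ)` bounds the
oscillation by `(2 + |wx - k| ^ β) ω(f, w ^ (-β))`. Otherwise `1 ≤ (2 |wx - k| / w) ^ β` and the
crude bound `2 ‖f‖∞` suffices. Summing against `|χ(wx - k)|` produces the moments `m₀` and `m_β`.
-/

open MeasureTheory Filter Set Real

noncomputable def moment (χ : ℝ → ℝ) (β : ℝ) : ENNReal :=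
  ⨆ u : ℝ, ∑' k : ℤ, ENNReal.ofReal (|χ (u - k)| * |u - k| ^ β)

def Chi1 (χ : ℝ → ℝ) : Prop :=
  Integrable χ ∧ ∃ B : ℝ, ∀ x ∈ Set.Icc (-1 : ℝ) 1, |χ x| ≤ B

def Chi2 (χ : ℝ → ℝ) : Prop := ∀ u : ℝ, HasSum (fun k : ℤ => χ (u - k)) 1

def Chi3 (χ : ℝ → ℝ) : Prop := ∃ β : ℝ, 0 < β ∧ moment χ β < ⊤

noncomputable def SK (χ : ℝ → ℝ) (w : ℝ) (f : ℝ → ℝ) (t : ℝ) : ℝ :=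
  ∑' k : ℤ, χ (w * t - k) * (w * ∫ u in ((k : ℝ) / w)..(((k : ℝ) + 1) / w), f u)

noncomputable def PsiM (χ : ℝ → ℝ) (x : ℝ) : ℝ :=
  ∑' k : ℤ, if x < (k : ℝ) then χ (x - k) else 0

noncomputable def PsiP (χ : ℝ → ℝ) (x : ℝ) : ℝ :=
  ∑' k : ℤ, if (k : ℝ) < x then χ (x - k) else 0

noncomputable def gjump (f : ℝ → ℝ) (t fp fm : ℝ) (x : ℝ) : ℝ :=
  if x < t then f x - fm else if x = t then 0 else f x - fp

noncomputable def modCont (f : ℝ → ℝ) (δ : ℝ) : ℝ :=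
  sSup {d : ℝ | ∃ x y : ℝ, |x - y| ≤ δ ∧ d = |f x - f y|}

noncomputable def ftrans (χ : ℝ → ℝ) (v : ℝ) : ℂ :=
  ∫ u : ℝ, (χ u : ℂ) * Complex.exp (-(Complex.I * u * v))

section ModulusOfContinuity

variable {f : ℝ → ℝ} {F δ : ℝ}

theorem bddAbove_modCont_set (hF : ∀ x, |f x| ≤ F) (δ : ℝ) :
    BddAbove {d : ℝ | ∃ x y : ℝ, |x - y| ≤ δ ∧ d = |f x - f y|} := by
  refine ⟨F + F, ?_⟩
  rintro d ⟨x, y, -, rfl⟩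
  exact (abs_sub _ _).trans (add_le_add (hF x) (hF y))

theorem abs_sub_le_modCont (hF : ∀ x, |f x| ≤ F) {x y : ℝ} (h : |x - y| ≤ δ) :
    |f x - f y| ≤ modCont f δ :=
  le_csSup (bddAbove_modCont_set hF δ) ⟨x, y, h, rfl⟩

theorem modCont_nonneg (hF : ∀ x, |f x| ≤ F) (hδ : 0 ≤ δ) : 0 ≤ modCont f δ :=
  (abs_nonneg _).trans (abs_sub_le_modCont hF (x := 0) (y := 0) (by simpa using hδ))

theorem modCont_le_of_forall {c : ℝ} (hδ : 0 ≤ δ)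
    (h : ∀ x y, |x - y| ≤ δ → |f x - f y| ≤ c) : modCont f δ ≤ c :=
  csSup_le ⟨_, 0, 0, by simpa using hδ, rfl⟩ fun _ ⟨x, y, hxy, hd⟩ => hd ▸ h x y hxy

theorem modCont_mono (hF : ∀ x, |f x| ≤ F) (hδ : 0 ≤ δ) {δ' : ℝ} (h : δ ≤ δ') :
    modCont f δ ≤ modCont f δ' :=
  modCont_le_of_forall hδ fun _ _ hxy => abs_sub_le_modCont hF (hxy.trans h)

theorem modCont_add_le (hF : ∀ x, |f x| ≤ F) {a b : ℝ} (ha : 0 ≤ a) (hb : 0 ≤ b) :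
    modCont f (a + b) ≤ modCont f a + modCont f b := by
  refine modCont_le_of_forall (add_nonneg ha hb) fun x y hxy => ?_
  -- `z` is the point of `[x - a, x + a]` closest to `y`
  set z := max (x - a) (min (x + a) y)
  have hxz : |x - z| ≤ a := by
    rw [abs_le] at hxy ⊢
    constructor <;> cases max_cases (x - a) (min (x + a) y) <;>
      cases min_cases (x + a) y <;> linarith
  have hzy : |z - y| ≤ b := by
    rw [abs_le] at hxy ⊢
    constructor <;> cases max_cases (x - a) (min (x + a) y) <;>
      cases min_cases (x + a) y <;> linarith
  calc |f x - f y| ≤ |f x - f z| + |f z - f y| := abs_sub_le _ _ _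
    _ ≤ modCont f a + modCont f b :=
      add_le_add (abs_sub_le_modCont hF hxz) (abs_sub_le_modCont hF hzy)

theorem modCont_nat_succ_mul_le (hF : ∀ x, |f x| ≤ F) (hδ : 0 ≤ δ) (n : ℕ) :
    modCont f ((n + 1) * δ) ≤ (n + 1) * modCont f δ := by
  induction n with
  | zero => simp
  | succ n ih =>
    calc modCont f ((↑(n + 1) + 1) * δ) = modCont f ((n + 1) * δ + δ) := by push_cast; ring_nf
      _ ≤ modCont f ((n + 1) * δ) + modCont f δ := modCont_add_le hF (by positivity) hδ
      _ ≤ (↑(n + 1) + 1) * modCont f δ := by push_cast; linarith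

theorem modCont_mul_le (hF : ∀ x, |f x| ≤ F) {l : ℝ} (hl : 0 ≤ l) (hδ : 0 ≤ δ) :
    modCont f (l * δ) ≤ (1 + l) * modCont f δ := by
  have hfloor := Nat.floor_le hl
  calc modCont f (l * δ) ≤ modCont f ((⌊l⌋₊ + 1) * δ) :=
        modCont_mono hF (by positivity) (by gcongr; exact (Nat.lt_floor_add_one l).le)
    _ ≤ (⌊l⌋₊ + 1) * modCont f δ := modCont_nat_succ_mul_le hF hδ _
    _ ≤ (1 + l) * modCont f δ :=
      mul_le_mul_of_nonneg_right (by linarith) (modCont_nonneg hF hδ)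

end ModulusOfContinuity

section Moments

variable {χ : ℝ → ℝ} {β : ℝ}

theorem tsum_ofReal_le_moment (u : ℝ) :
    ∑' k : ℤ, ENNReal.ofReal (|χ (u - k)| * |u - k| ^ β) ≤ moment χ β :=
  le_iSup (fun u : ℝ => ∑' k : ℤ, ENNReal.ofReal (|χ (u - k)| * |u - k| ^ β)) u

theorem hasSum_moment_terms (hm : moment χ β ≠ ⊤) (u : ℝ) :
    HasSum (fun k : ℤ => |χ (u - k)| * |u - k| ^ β)
      (∑' k : ℤ, ENNReal.ofReal (|χ (u - k)| * |u - k| ^ β)).toReal := by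
  have hne := ne_top_of_le_ne_top hm (tsum_ofReal_le_moment (χ := χ) (β := β) u)
  have hnonneg (k : ℤ) : 0 ≤ |χ (u - k)| * |u - k| ^ β := by positivity
  rw [ENNReal.tsum_toReal_eq fun _ => ENNReal.ofReal_ne_top]
  simpa only [ENNReal.toReal_ofReal (hnonneg _)] using (ENNReal.summable_toReal hne).hasSum

theorem summable_moment_terms (hm : moment χ β ≠ ⊤) (u : ℝ) :
    Summable fun k : ℤ => |χ (u - k)| * |u - k| ^ β :=
  (hasSum_moment_terms hm u).summable

theorem tsum_moment_terms_le (hm : moment χ β ≠ ⊤) (u : ℝ) :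
    ∑' k : ℤ, |χ (u - k)| * |u - k| ^ β ≤ (moment χ β).toReal := by
  rw [(hasSum_moment_terms hm u).tsum_eq]
  exact ENNReal.toReal_mono hm (tsum_ofReal_le_moment u)

theorem Int.eq_floor_or_eq_floor_add_one_of_abs_sub_lt_one {u : ℝ} {k : ℤ}
    (h : |u - k| < 1) : k = ⌊u⌋ ∨ k = ⌊u⌋ + 1 := by
  rw [abs_lt] at h
  have h₁ : ⌊u⌋ < k + 1 := Int.floor_lt.mpr (by push_cast; linarith)
  have h₂ : k - 1 ≤ ⌊u⌋ := Int.le_floor.mpr (by push_cast; linarith)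
  omega

theorem tsum_ite_abs_sub_lt_one_le (u : ℝ) (c : ENNReal) :
    ∑' k : ℤ, (if |u - k| < 1 then c else 0) ≤ 2 * c := by
  have hsupp : ∀ k ∉ ({⌊u⌋, ⌊u⌋ + 1} : Finset ℤ), (if |u - k| < 1 then c else 0) = 0 := by
    intro k hk
    rw [if_neg]
    intro h
    rcases Int.eq_floor_or_eq_floor_add_one_of_abs_sub_lt_one h with rfl | rfl <;> simp at hk
  rw [tsum_eq_sum hsupp, Finset.sum_pair (by omega), two_mul]
  gcongr <;> split_ifs <;> simp

/-- Away from `[-1, 1]` the weight `|t| ^ 0 = 1` is dominated by `|t| ^ β`, and at most two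
translates `u - k` fall into `(-1, 1)`. -/
theorem moment_zero_le (hβ : 0 ≤ β) {B : ℝ} (hB : ∀ x ∈ Icc (-1 : ℝ) 1, |χ x| ≤ B) :
    moment χ 0 ≤ moment χ β + 2 * ENNReal.ofReal B := by
  refine iSup_le fun u => ?_
  have hterm (k : ℤ) : ENNReal.ofReal (|χ (u - k)| * |u - k| ^ (0 : ℝ))
      ≤ ENNReal.ofReal (|χ (u - k)| * |u - k| ^ β)
        + (if |u - k| < 1 then ENNReal.ofReal B else 0) := by
    rw [rpow_zero, mul_one]
    split_ifs with h
    · exact le_add_left (ENNReal.ofReal_le_ofReal (hB _ (abs_le.mp h.le)))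
    · rw [add_zero]
      refine ENNReal.ofReal_le_ofReal (le_mul_of_one_le_right (abs_nonneg _) ?_)
      exact one_le_rpow (not_lt.mp h) hβ
  calc ∑' k : ℤ, ENNReal.ofReal (|χ (u - k)| * |u - k| ^ (0 : ℝ))
      ≤ ∑' k : ℤ, (ENNReal.ofReal (|χ (u - k)| * |u - k| ^ β)
          + (if |u - k| < 1 then ENNReal.ofReal B else 0)) := ENNReal.tsum_le_tsum hterm
    _ = ∑' k : ℤ, ENNReal.ofReal (|χ (u - k)| * |u - k| ^ β)
          + ∑' k : ℤ, (if |u - k| < 1 then ENNReal.ofReal B else 0) := ENNReal.tsum_add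
    _ ≤ moment χ β + 2 * ENNReal.ofReal B :=
      add_le_add (tsum_ofReal_le_moment u) (tsum_ite_abs_sub_lt_one_le u _)

theorem moment_zero_ne_top (hβ : 0 ≤ β) (hm : moment χ β ≠ ⊤) {B : ℝ}
    (hB : ∀ x ∈ Icc (-1 : ℝ) 1, |χ x| ≤ B) : moment χ 0 ≠ ⊤ :=
  ne_top_of_le_ne_top (ENNReal.add_ne_top.mpr ⟨hm, ENNReal.mul_ne_top (by simp) (by simp)⟩)
    (moment_zero_le hβ hB)

theorem summable_abs_translate (hm0 : moment χ 0 ≠ ⊤) (u : ℝ) :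
    Summable fun k : ℤ => |χ (u - k)| := by
  simpa only [rpow_zero, mul_one] using summable_moment_terms hm0 u

theorem hasSum_abs_mul_add_rpow (hmβ : moment χ β ≠ ⊤) (hm0 : moment χ 0 ≠ ⊤) (u A B : ℝ) :
    HasSum (fun k : ℤ => |χ (u - k)| * (A + B * |u - k| ^ β))
      (A * ∑' k : ℤ, |χ (u - k)| + B * ∑' k : ℤ, |χ (u - k)| * |u - k| ^ β) := by
  have hsplit : (fun k : ℤ => |χ (u - k)| * (A + B * |u - k| ^ β))
      = fun k : ℤ => A * |χ (u - k)| + B * (|χ (u - k)| * |u - k| ^ β) := by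
    ext k; ring
  rw [hsplit]
  exact ((summable_abs_translate hm0 u).hasSum.mul_left A).add ((summable_moment_terms hmβ u).hasSum.mul_left B)

theorem tsum_abs_mul_add_rpow_le (hmβ : moment χ β ≠ ⊤) (hm0 : moment χ 0 ≠ ⊤) (u : ℝ)
    {A B : ℝ} (hA : 0 ≤ A) (hB : 0 ≤ B) :
    ∑' k : ℤ, |χ (u - k)| * (A + B * |u - k| ^ β)
      ≤ A * (moment χ 0).toReal + B * (moment χ β).toReal := by
  rw [(hasSum_abs_mul_add_rpow hmβ hm0 u A B).tsum_eq]
  gcongr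
  · simpa only [rpow_zero, mul_one] using tsum_moment_terms_le hm0 u
  · exact tsum_moment_terms_le hmβ u

end Moments

section CellEstimate

variable {f : ℝ → ℝ} {F β w : ℝ}

theorem abs_sub_le_of_abs_sub_le_div (hF : ∀ x, |f x| ≤ F) (hβ0 : 0 < β) (hβ1 : β ≤ 1)
    (hw : 0 < w) {x y d : ℝ} (hd : 0 ≤ d) (hxy : |x - y| ≤ (1 + d) / w)
    (h1 : (1 + d) / w ≤ 1) :
    |f x - f y| ≤ (2 + d ^ β) * modCont f (w ^ (-β)) := by
  have hpow : |x - y| ^ β ≤ (1 + d ^ β) * w ^ (-β) :=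
    calc |x - y| ^ β ≤ ((1 + d) / w) ^ β := by gcongr
      _ = (1 + d) ^ β * w ^ (-β) := by
        rw [div_rpow (by positivity) hw.le, rpow_neg hw.le, div_eq_mul_inv]
      _ ≤ (1 + d ^ β) * w ^ (-β) := by
        gcongr
        simpa using rpow_add_le_add_rpow zero_le_one hd hβ0.le hβ1
  calc |f x - f y| ≤ modCont f (|x - y| ^ β) :=
        abs_sub_le_modCont hF (self_le_rpow_of_le_one (abs_nonneg _) (hxy.trans h1) hβ1)
    _ ≤ modCont f ((1 + d ^ β) * w ^ (-β)) := modCont_mono hF (by positivity) hpow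
    _ ≤ (1 + (1 + d ^ β)) * modCont f (w ^ (-β)) :=
        modCont_mul_le hF (by positivity) (by positivity)
    _ = (2 + d ^ β) * modCont f (w ^ (-β)) := by ring

theorem abs_sub_le_of_mem_cell (hF : ∀ x, |f x| ≤ F) (hβ0 : 0 < β) (hβ1 : β ≤ 1)
    (hw : 2 ≤ w) (x : ℝ) {k : ℤ} {u : ℝ} (hu : u ∈ Ioc (k / w) ((k + 1) / w)) :
    |f u - f x| ≤ 2 * modCont f (w ^ (-β))
      + (modCont f (w ^ (-β)) + 2 * F * (2 / w) ^ β) * |w * x - k| ^ β := by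
  have hw0 : 0 < w := by linarith
  have hω : 0 ≤ modCont f (w ^ (-β)) := modCont_nonneg hF (by positivity)
  have hF0 : 0 ≤ F := (abs_nonneg _).trans (hF 0)
  have hfar : 0 ≤ 2 * F * (2 / w) ^ β * |w * x - k| ^ β := by positivity
  obtain ⟨hu₁, hu₂⟩ := hu
  rw [div_lt_iff₀ hw0] at hu₁
  rw [le_div_iff₀ hw0] at hu₂
  by_cases hnear : |w * x - k| ≤ w / 2
  · have hux : |u - x| ≤ (1 + |w * x - k|) / w := by
      rw [le_div_iff₀ hw0]
      calc |u - x| * w = |(w * u - k) - (w * x - k)| := by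
            rw [show (w * u - k) - (w * x - k) = (u - x) * w by ring, abs_mul, abs_of_pos hw0]
        _ ≤ |w * u - k| + |w * x - k| := abs_sub _ _
        _ ≤ 1 + |w * x - k| := by gcongr; exact abs_le.mpr ⟨by linarith, by linarith⟩
    have h1 : (1 + |w * x - k|) / w ≤ 1 := by rw [div_le_one hw0]; linarith
    have := abs_sub_le_of_abs_sub_le_div hF hβ0 hβ1 hw0 (abs_nonneg _) hux h1
    linarith
  · have hone : 1 ≤ (2 / w) ^ β * |w * x - k| ^ β := by
      rw [← mul_rpow (by positivity) (abs_nonneg _)]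
      refine one_le_rpow ?_ hβ0.le
      rw [div_mul_eq_mul_div, le_div_iff₀ hw0]
      linarith
    have : |f u - f x| ≤ 2 * F := (abs_sub _ _).trans (by linarith [hF u, hF x])
    nlinarith [rpow_nonneg (abs_nonneg (w * x - k)) β]

theorem abs_mul_integral_sub_le (hw : 0 < w) {a c C : ℝ}
    (hf : IntervalIntegrable f volume (a / w) ((a + 1) / w))
    (h : ∀ u ∈ Ioc (a / w) ((a + 1) / w), |f u - c| ≤ C) :
    |(w * ∫ u in a / w..(a + 1) / w, f u) - c| ≤ C := by
  have hlen : (a + 1) / w - a / w = 1 / w := by ring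
  have hle : a / w ≤ (a + 1) / w := by gcongr; linarith
  have hbound := intervalIntegral.norm_integral_le_of_norm_le_const (f := fun u => f u - c)
    (fun u hu => by rw [uIoc_of_le hle] at hu; exact h u hu)
  rw [intervalIntegral.integral_sub hf intervalIntegrable_const, intervalIntegral.integral_const,
    hlen, abs_of_pos (by positivity), smul_eq_mul, Real.norm_eq_abs] at hbound
  calc |(w * ∫ u in a / w..(a + 1) / w, f u) - c|
      = |w * ((∫ u in a / w..(a + 1) / w, f u) - 1 / w * c)| := by congr 1; field_simp
    _ = w * |(∫ u in a / w..(a + 1) / w, f u) - 1 / w * c| := by rw [abs_mul, abs_of_pos hw]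
    _ ≤ w * (C * (1 / w)) := by gcongr
    _ = C := by field_simp

end CellEstimate

theorem abs_tsum_mul_sub_le {ι : Type*} {g a C : ι → ℝ} {c : ℝ} (hg : HasSum g 1)
    (hga : Summable fun i => g i * a i) (hgC : Summable fun i => |g i| * C i)
    (h : ∀ i, |a i - c| ≤ C i) :
    |∑' i, g i * a i - c| ≤ ∑' i, |g i| * C i := by
  have hsum : HasSum (fun i => g i * (a i - c)) (∑' i, g i * a i - c) := by
    simpa only [mul_sub, one_mul] using hga.hasSum.sub (hg.mul_right c)
  refine hsum.norm_le_of_bounded hgC.hasSum fun i => ?_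
  rw [Real.norm_eq_abs, abs_mul]
  exact mul_le_mul_of_nonneg_left (h i) (abs_nonneg _)

theorem abs_SK_sub_le {χ f : ℝ → ℝ} {β F w : ℝ} (hχ : Chi2 χ) (hβ0 : 0 < β) (hβ1 : β ≤ 1)
    (hmβ : moment χ β ≠ ⊤) (hm0 : moment χ 0 ≠ ⊤) (hf : Continuous f)
    (hF : ∀ x, |f x| ≤ F) (hw : 2 ≤ w) (x : ℝ) :
    |SK χ w f x - f x| ≤
      modCont f (w ^ (-β)) * ((moment χ β).toReal + 2 * (moment χ 0).toReal)
        + 2 ^ (β + 1) * F * (moment χ β).toReal * w ^ (-β) := by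
  have hw0 : 0 < w := by linarith
  set ω := modCont f (w ^ (-β))
  set a : ℤ → ℝ := fun k => w * ∫ u in (k : ℝ) / w..((k : ℝ) + 1) / w, f u
  have hω : 0 ≤ ω := modCont_nonneg hF (by positivity)
  have hF0 : 0 ≤ F := (abs_nonneg _).trans (hF 0)
  have hcell (k : ℤ) {c B : ℝ} (h : ∀ u ∈ Ioc ((k : ℝ) / w) ((k + 1) / w), |f u - c| ≤ B) :
      |a k - c| ≤ B :=
    abs_mul_integral_sub_le hw0 (hf.intervalIntegrable _ _) h
  have hχa : Summable fun k : ℤ => χ (w * x - k) * a k := by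
    refine .of_norm_bounded ((summable_abs_translate hm0 (w * x)).mul_right F) fun k => ?_
    rw [Real.norm_eq_abs, abs_mul]
    exact mul_le_mul_of_nonneg_left (by simpa using hcell k (c := 0) fun u _ => by simpa using hF u)
      (abs_nonneg _)
  have hpow : 2 * (2 / w) ^ β = 2 ^ (β + 1) * w ^ (-β) := by
    rw [rpow_add two_pos, rpow_one, div_rpow zero_le_two hw0.le, rpow_neg hw0.le]; ring
  calc |SK χ w f x - f x|
      ≤ ∑' k : ℤ, |χ (w * x - k)| * (2 * ω + (ω + 2 * F * (2 / w) ^ β) * |w * x - k| ^ β) :=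
        abs_tsum_mul_sub_le (hχ (w * x)) hχa (hasSum_abs_mul_add_rpow hmβ hm0 _ _ _).summable
          fun k => hcell k fun u hu => abs_sub_le_of_mem_cell hF hβ0 hβ1 hw x hu
    _ ≤ 2 * ω * (moment χ 0).toReal + (ω + 2 * F * (2 / w) ^ β) * (moment χ β).toReal :=
        tsum_abs_mul_add_rpow_le hmβ hm0 _ (by positivity) (by positivity)
    _ = ω * ((moment χ β).toReal + 2 * (moment χ 0).toReal)
          + 2 ^ (β + 1) * F * (moment χ β).toReal * w ^ (-β) := by
      linear_combination F * (moment χ β).toReal * hpow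

theorem stmt11 (χ : ℝ → ℝ) (h1 : Chi1 χ) (h2 : Chi2 χ)
    (β : ℝ) (hβ0 : 0 < β) (hβ1 : β < 1) (hmom : moment χ β < ⊤)
    (f : ℝ → ℝ) (hfu : UniformContinuous f) (hfb : ∃ B : ℝ, ∀ x, |f x| ≤ B) :
    ∀ w : ℝ, 2 ≤ w → ∀ x : ℝ,
      |SK χ w f x - f x| ≤
        modCont f (w ^ (-β)) * ((moment χ β).toReal + 2 * (moment χ 0).toReal)
          + 2 ^ (β + 1) * (⨆ y, |f y|) * (moment χ β).toReal * w ^ (-β) := by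
  intro w hw x
  obtain ⟨B, hB⟩ := hfb
  obtain ⟨A, hA⟩ := h1.2
  have hsup (y : ℝ) : |f y| ≤ ⨆ y, |f y| :=
    le_ciSup ⟨B, by rintro _ ⟨z, rfl⟩; exact hB z⟩ y
  exact abs_SK_sub_le h2 hβ0 hβ1.le hmom.ne (moment_zero_ne_top hβ0.le hmom.ne hA)
    hfu.continuous hsup hw x
end

section
/- Let χ_a, χ_b: ℝ → ℝ be two continuous kernels (each satisfying (χ1), (χ2), (χ3)) with supp χ_a ⊆ [-a,a], supp χ_b ⊆ [-b,b] for positive a, b, and let α ∈ ℝ. Define χ(x) := (1-α)·χ_a(x-a-1) + α·χ_b(x+b). Then χ is a kernel satisfying (χ1), (χ2), and (χ3), and χ(x) = 0 for every x ∈ [0,1). -/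
/-!
The two translates `x ↦ χa (x - a - 1)` and `x ↦ χb (x + b)` are continuous with compact support,
which already gives integrability, boundedness and finite moments of every order `β ≥ 0`: if the
support lies in `[-R, R]`, then for each `u` at most `2⌈R⌉ + 3` integers `k` contribute to the
moment sum. Condition (χ2) is
preserved by translations and by affine combinations `(1 - α) f + α g`. Finally, the support of a
continuous function is open, so a support inside `[-c, c]` lies in `(-c, c)`; hence `χa (x - a - 1)`
and `χb (x + b)` both vanish for `x ∈ [0, 1)`, including `χb b = 0` at `x = 0`.
-/

open MeasureTheory Filter Set Real

theorem Continuous.support_subset_Ioo {f : ℝ → ℝ} {c d : ℝ} (hf : Continuous f)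
    (hs : Function.support f ⊆ Icc c d) : Function.support f ⊆ Ioo c d :=
  interior_Icc (a := c) (b := d) ▸ interior_maximal hs hf.isOpen_support

theorem HasCompactSupport.comp_add_right {G M : Type*} [TopologicalSpace G] [AddGroup G]
    [ContinuousAdd G] [Zero M] {f : G → M} (hf : HasCompactSupport f) (c : G) :
    HasCompactSupport fun x => f (x + c) :=
  hf.comp_homeomorph (Homeomorph.addRight c)

theorem tsum_ofReal_comp_sub_intCast_le {f : ℝ → ℝ} {C R : ℝ} (hC : ∀ x, f x ≤ C)
    (hR : ∀ x, R < |x| → f x = 0) (u : ℝ) :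
    ∑' k : ℤ, ENNReal.ofReal (f (u - k)) ≤ (2 * (⌈R⌉₊ + 1) + 1 : ℕ) * ENNReal.ofReal C := by
  set N : ℕ := ⌈R⌉₊ + 1
  have hRN : R < N := by push_cast [N]; linarith [Nat.le_ceil R]
  set s : Finset ℤ := Finset.Icc (⌊u⌋ - N) (⌊u⌋ + N)
  have hout : ∀ k ∉ s, ENNReal.ofReal (f (u - k)) = 0 := by
    intro k hk
    suffices R < |u - k| by rw [hR _ this, ENNReal.ofReal_zero]
    rcases not_and_or.mp (Finset.mem_Icc.not.mp hk) with hk | hk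
    · have : (k : ℝ) + 1 ≤ ⌊u⌋ - N := by exact_mod_cast Int.add_one_le_of_lt (not_le.mp hk)
      rw [abs_of_pos] <;> linarith [Int.floor_le u]
    · have : (⌊u⌋ : ℝ) + N + 1 ≤ k := by exact_mod_cast Int.add_one_le_of_lt (not_le.mp hk)
      rw [abs_of_neg] <;> linarith [Int.lt_floor_add_one u]
  have hcard : s.card = 2 * N + 1 := by
    rw [Int.card_Icc]; omega
  calc ∑' k : ℤ, ENNReal.ofReal (f (u - k))
      = ∑ k ∈ s, ENNReal.ofReal (f (u - k)) := tsum_eq_sum hout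
    _ ≤ s.card • ENNReal.ofReal C :=
        Finset.sum_le_card_nsmul _ _ _ fun k _ => ENNReal.ofReal_le_ofReal (hC _)
    _ = (2 * N + 1 : ℕ) * ENNReal.ofReal C := by rw [nsmul_eq_mul, hcard]

theorem moment_lt_top_of_continuous_of_hasCompactSupport {χ : ℝ → ℝ} (hc : Continuous χ)
    (hs : HasCompactSupport χ) {β : ℝ} (hβ : 0 ≤ β) : moment χ β < ⊤ := by
  obtain ⟨M, hM⟩ := hs.exists_bound_of_continuous hc
  obtain ⟨R, hR⟩ := hs.isCompact.isBounded.subset_closedBall 0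
  set R' := max R 0
  have hvanish : ∀ x, R' < |x| → χ x = 0 := fun x hx =>
    image_eq_zero_of_notMem_tsupport fun h =>
      (mem_closedBall_zero_iff.mp (hR h)).not_gt (lt_of_le_of_lt (le_max_left R 0) hx)
  have hM0 : 0 ≤ M := (norm_nonneg _).trans (hM 0)
  have hbound : ∀ x, |χ x| * |x| ^ β ≤ M * R' ^ β := by
    intro x
    rcases le_or_gt |x| R' with hx | hx
    · exact mul_le_mul (hM x) (rpow_le_rpow (abs_nonneg x) hx hβ) (by positivity) hM0
    · rw [hvanish x hx, abs_zero, zero_mul]; positivity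
  calc moment χ β ≤ (2 * (⌈R'⌉₊ + 1) + 1 : ℕ) * ENNReal.ofReal (M * R' ^ β) :=
        iSup_le fun u => tsum_ofReal_comp_sub_intCast_le hbound
          (fun x hx => by rw [hvanish x hx, abs_zero, zero_mul]) u
    _ < ⊤ := ENNReal.mul_lt_top (ENNReal.natCast_lt_top _) ENNReal.ofReal_lt_top

theorem Chi1.of_continuous_of_hasCompactSupport {χ : ℝ → ℝ} (hc : Continuous χ)
    (hs : HasCompactSupport χ) : Chi1 χ := by
  obtain ⟨M, hM⟩ := hs.exists_bound_of_continuous hc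
  exact ⟨hc.integrable_of_hasCompactSupport hs, M, fun x _ => hM x⟩

theorem Chi3.of_continuous_of_hasCompactSupport {χ : ℝ → ℝ} (hc : Continuous χ)
    (hs : HasCompactSupport χ) : Chi3 χ :=
  ⟨1, one_pos, moment_lt_top_of_continuous_of_hasCompactSupport hc hs zero_le_one⟩

theorem Chi2.comp_add_right {χ : ℝ → ℝ} (h : Chi2 χ) (c : ℝ) : Chi2 fun x => χ (x + c) :=
  fun u => by simpa only [add_sub_right_comm] using h (u + c)

theorem Chi2.affine_combination {f g : ℝ → ℝ} (hf : Chi2 f) (hg : Chi2 g) (α : ℝ) :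
    Chi2 fun x => (1 - α) * f x + α * g x :=
  fun u => by simpa using ((hf u).mul_left (1 - α)).add ((hg u).mul_left α)

theorem stmt14_general (χa χb : ℝ → ℝ) (hca : Continuous χa) (hcb : Continuous χb)
    (h2a : Chi2 χa) (h2b : Chi2 χb) (a b : ℝ)
    (hsa : Function.support χa ⊆ Set.Icc (-a) a)
    (hsb : Function.support χb ⊆ Set.Icc (-b) b) (α : ℝ) :
    Chi1 (fun x => (1 - α) * χa (x - a - 1) + α * χb (x + b)) ∧
    Chi2 (fun x => (1 - α) * χa (x - a - 1) + α * χb (x + b)) ∧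
    Chi3 (fun x => (1 - α) * χa (x - a - 1) + α * χb (x + b)) ∧
    ∀ x ∈ Set.Ico (0 : ℝ) 1, (1 - α) * χa (x - a - 1) + α * χb (x + b) = 0 := by
  have shift_a : ∀ x, x + -(a + 1) = x - a - 1 := fun x => by ring
  have hc : Continuous fun x => (1 - α) * χa (x - a - 1) + α * χb (x + b) := by fun_prop
  have hs : HasCompactSupport fun x => (1 - α) * χa (x - a - 1) + α * χb (x + b) := by
    have hsa' := (HasCompactSupport.of_support_subset_isCompact isCompact_Icc hsa).comp_add_right
      (-(a + 1))
    have hsb' := (HasCompactSupport.of_support_subset_isCompact isCompact_Icc hsb).comp_add_right b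
    simp only [shift_a] at hsa'
    exact (hsa'.mul_left (f := fun _ => 1 - α)).add (hsb'.mul_left (f := fun _ => α))
  refine ⟨.of_continuous_of_hasCompactSupport hc hs, ?_,
    .of_continuous_of_hasCompactSupport hc hs, ?_⟩
  · have h2a' := h2a.comp_add_right (-(a + 1))
    simp only [shift_a] at h2a'
    exact h2a'.affine_combination (h2b.comp_add_right b) α
  · rintro x ⟨hx0, hx1⟩
    have hza : χa (x - a - 1) = 0 := Function.notMem_support.mp fun h =>
      (hca.support_subset_Ioo hsa h).1.not_ge (by linarith)
    have hzb : χb (x + b) = 0 := Function.notMem_support.mp fun h =>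
      (hcb.support_subset_Ioo hsb h).2.not_ge (by linarith)
    rw [hza, hzb, mul_zero, mul_zero, add_zero]

theorem stmt14 (χa χb : ℝ → ℝ) (hca : Continuous χa) (hcb : Continuous χb)
    (h1a : Chi1 χa) (h2a : Chi2 χa) (h3a : Chi3 χa)
    (h1b : Chi1 χb) (h2b : Chi2 χb) (h3b : Chi3 χb)
    (a b : ℝ) (ha : 0 < a) (hb : 0 < b)
    (hsa : Function.support χa ⊆ Set.Icc (-a) a)
    (hsb : Function.support χb ⊆ Set.Icc (-b) b) (α : ℝ) :
    Chi1 (fun x => (1 - α) * χa (x - a - 1) + α * χb (x + b)) ∧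
    Chi2 (fun x => (1 - α) * χa (x - a - 1) + α * χb (x + b)) ∧
    Chi3 (fun x => (1 - α) * χa (x - a - 1) + α * χb (x + b)) ∧
    ∀ x ∈ Set.Ico (0 : ℝ) 1, (1 - α) * χa (x - a - 1) + α * χb (x + b) = 0 :=
  stmt14_general χa χb hca hcb h2a h2b a b hsa hsb α
end
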